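/- Demographic Influence generalizes Node-Kayles: let G₀ = (V₀, E₀) be a finite simple graph. Define the Demographic Influence position Z = (G, Θ, D) where the vertex set is V₀ together with a new vertex t_v for each v ∈ V₀; Θ(v) = 0 for all v ∈ V₀ and Θ(t_v) = 1 for all v ∈ V₀; the adjacencies of G are: each v ∈ V₀ is adjacent to t_v, to every w ∈ V₀ with (v, w) ∈ E₀, and to t_w for every neighbor w of v in G₀ (and there are no other edges); and D = { D_v : v ∈ V₀ } with D_v = { v, t_v }. Then Node-Kayles on G₀ is isomorphic (as a game tree, via the move correspondence v ↔ (D_v, 1)) to the Demographic Influence game on Z. -/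

import Mathlib

open scoped Classical

noncomputable section

namespace TW

variable {ι κ : Type*}

/-- A column `j` of a Crosswise AND position is feasible if it contains a `true` (green) entry. -/
def Feasible (B : ι → κ → Bool) (j : κ) : Prop := ∃ i, B i j = true

/-- The Crosswise AND move at column `j`: if `B i j = false` then row `i` becomes all false;
otherwise row `i` is unchanged except that entry `(i, j)` becomes false. -/
def move (B : ι → κ → Bool) (j : κ) : ι → κ → Bool :=
  fun i j' => if B i j = false then false else if j' = j then false else B i j'

/-- A Demographic Influence move `(Dk, q)` is feasible if `q ≥ 1` and some member of the
demographic `Dk` has threshold at least `q`. -/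
def diFeasible {V : Type*} (Θ : V → ℤ) (Dk : Finset V) (q : ℕ) : Prop :=
  1 ≤ q ∧ ∃ v ∈ Dk, (q : ℤ) ≤ Θ v

/-- The Demographic Influence move `(Dk, q)`: first every member of `Dk` has its value
reduced by `q`; then every member of `Dk` whose value was `≥ 0` before the move and is
`< 0` after the subtraction sets the value of each of its neighbours in `G` to `-1`. -/
def diMove {V : Type*} (G : SimpleGraph V) (Dk : Finset V) (Θ : V → ℤ) (q : ℕ) :
    V → ℤ :=
  fun v =>
    if ∃ u ∈ Dk, 0 ≤ Θ u ∧ Θ u - q < 0 ∧ G.Adj u v then -1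
    else if v ∈ Dk then Θ v - q else Θ v

/-- The graph of the reduction from Node-Kayles on `G₀` to Demographic Influence: the
vertices of `G₀` (as `Sum.inl`) together with a new vertex `t_v = Sum.inr v` for each
`v ∈ V₀`; each `v` is adjacent to `t_v`, to each of its `G₀`-neighbours `w`, and to `t_w`
for each of its `G₀`-neighbours `w`; there are no other edges. -/
def NKDIgraph {V₀ : Type*} (G₀ : SimpleGraph V₀) : SimpleGraph (V₀ ⊕ V₀) where
  Adj a b := match a, b with
    | .inl u, .inl v => G₀.Adj u v
    | .inl u, .inr v => u = v ∨ G₀.Adj u v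
    | .inr v, .inl u => u = v ∨ G₀.Adj u v
    | .inr _, .inr _ => False
  symm := by
    constructor
    rintro (u | u) (v | v) h
    · exact G₀.adj_symm h
    · exact h
    · exact h
    · exact h.elim
  loopless := by
    constructor
    rintro (u | u) h
    · exact G₀.irrefl h
    · exact h.elim

/-- `NKDIEq G₀ G D A Θ` says that the Node-Kayles game on `G₀` with available vertex set
`A` and the Demographic Influence game on `(G, Θ, D)` have isomorphic game trees via the
move correspondence `v ↔ (D v, 1)`: the feasible Demographic Influence moves are exactly
the pairs `(D v, 1)` with `v ∈ A`, and the move operations commute, recursively. -/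
def NKDIEq {V₀ : Type*} [Fintype V₀] [DecidableEq V₀] (G₀ : SimpleGraph V₀)
    (G : SimpleGraph (V₀ ⊕ V₀)) (D : V₀ → Finset (V₀ ⊕ V₀))
    (A : Finset V₀) (Θ : (V₀ ⊕ V₀) → ℤ) : Prop :=
  (∀ (v : V₀) (q : ℕ), diFeasible Θ (D v) q ↔ (q = 1 ∧ v ∈ A)) ∧
  ∀ v, ∀ _ : v ∈ A,
    NKDIEq G₀ G D (A \ insert v (Finset.univ.filter (G₀.Adj v))) (diMove G (D v) Θ 1)
termination_by A.card
decreasing_by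
  rename_i h
  exact Finset.card_lt_card
    ((Finset.ssubset_iff_of_subset Finset.sdiff_subset).mpr ⟨v, h, by simp⟩)

section NodeKayles

variable {V₀ : Type*} [DecidableEq V₀]

/-- The thresholds encoding the Node-Kayles position with available vertex set `A`:
`v ∈ A` and `t_v` keep their initial values `0` and `1`, everything else is dead (`-1`). -/
def kaylesThreshold (A : Finset V₀) : V₀ ⊕ V₀ → ℤ :=
  Sum.elim (fun v => if v ∈ A then 0 else -1) (fun v => if v ∈ A then 1 else -1)

theorem diFeasible_kaylesThreshold_iff (A : Finset V₀) (v : V₀) (q : ℕ) :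
    diFeasible (kaylesThreshold A) {Sum.inl v, Sum.inr v} q ↔ q = 1 ∧ v ∈ A := by
  by_cases hv : v ∈ A <;>
    simp [diFeasible, kaylesThreshold, hv] <;> omega

/-- Of `v` and `t_v`, only `v` crosses from `≥ 0` to `< 0` under `(D_v, 1)`, so the vertices
set to `-1` are exactly the neighbours of `v`. -/
theorem exists_crossing_iff_adj (G₀ : SimpleGraph V₀) {A : Finset V₀} {v : V₀} (hv : v ∈ A)
    (x : V₀ ⊕ V₀) :
    (∃ u ∈ ({Sum.inl v, Sum.inr v} : Finset (V₀ ⊕ V₀)),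
        0 ≤ kaylesThreshold A u ∧ kaylesThreshold A u - (1 : ℕ) < 0 ∧ (NKDIgraph G₀).Adj u x) ↔
      (NKDIgraph G₀).Adj (Sum.inl v) x := by
  simp [kaylesThreshold, hv]

theorem diMove_kaylesThreshold [Fintype V₀] (G₀ : SimpleGraph V₀) {A : Finset V₀} {v : V₀}
    (hv : v ∈ A) :
    diMove (NKDIgraph G₀) {Sum.inl v, Sum.inr v} (kaylesThreshold A) 1 =
      kaylesThreshold (A \ insert v (Finset.univ.filter (G₀.Adj v))) := by
  funext x
  rw [diMove, if_congr (exists_crossing_iff_adj G₀ hv x) rfl rfl]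
  rcases x with w | w <;> by_cases hwv : w = v
  all_goals by_cases hw : w ∈ A <;> by_cases hadj : G₀.Adj v w <;>
    simp [kaylesThreshold, NKDIgraph, hwv, hw, hadj, hv, eq_comm (a := v)]

theorem nkdiEq_kaylesThreshold [Fintype V₀] (G₀ : SimpleGraph V₀) (A : Finset V₀) :
    NKDIEq G₀ (NKDIgraph G₀) (fun v => {Sum.inl v, Sum.inr v}) A (kaylesThreshold A) := by
  induction A using Finset.strongInduction with
  | H A ih =>
    rw [NKDIEq]
    refine ⟨diFeasible_kaylesThreshold_iff A, fun v hv => ?_⟩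
    rw [diMove_kaylesThreshold G₀ hv]
    exact ih _ ((Finset.ssubset_iff_of_subset Finset.sdiff_subset).mpr ⟨v, hv, by simp⟩)

end NodeKayles

/-- Demographic Influence generalizes Node-Kayles.  For a finite simple
graph `G₀`, Node-Kayles on `G₀` (all vertices initially available) is isomorphic, via the
move correspondence `v ↔ (D_v, 1)`, to the Demographic Influence game on `Z = (G, Θ, D)`
where `G = NKDIgraph G₀`, `Θ v = 0` and `Θ (t_v) = 1` for `v ∈ V₀`, and
`D_v = {v, t_v}`. -/
theorem stmt14 {V₀ : Type*} [Fintype V₀] [DecidableEq V₀] (G₀ : SimpleGraph V₀) :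
    NKDIEq G₀ (NKDIgraph G₀) (fun v => {Sum.inl v, Sum.inr v}) Finset.univ
      (Sum.elim (fun _ => (0 : ℤ)) (fun _ => (1 : ℤ))) := by
  simpa [kaylesThreshold] using nkdiEq_kaylesThreshold G₀ Finset.univ

end TW
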